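/- arXiv:1508.01133 — 6 statements merged into one kernel-verified Lean document; each statement's English description precedes it below -/
import Mathlib

section
/- For any group G and any cycle in the directed graph whose vertices are subgroups of G with an arc of weight r from H to K whenever H ⊆ K and [K : H] = r is finite, the product of the weights of all clockwise arcs equals the product of the weights of all counter-clockwise arcs. -/
/-!
All subgroups on the cycle are commensurable, so their intersection `B` has finite index
`a i = [v i : B]` in every vertex. Along an arc `H → K` of weight `r` we have
`[H : B] * r = [K : B]`, so going once around the cycle the factors `a i` telescope away and
the clockwise and counter-clockwise weights have the same product.
-/

theorem Equivalence.zmod_of_forall_succ {α : Type*} {R : α → α → Prop} (hR : Equivalence R)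
    {n : ℕ} {f : ZMod n → α} (h : ∀ i, R (f i) (f (i + 1))) (i j : ZMod n) :
    R (f i) (f j) := by
  suffices ∀ k : ℤ, R (f i) (f (i + k)) by
    obtain ⟨k, hk⟩ := ZMod.intCast_surjective (j - i)
    simpa [hk] using this k
  intro k
  induction k using Int.induction_on with
  | zero => simpa using hR.refl (f i)
  | succ k ih => exact hR.trans ih (by simpa [add_assoc] using h (i + k))
  | pred k ih =>
    refine hR.trans ih (hR.symm ?_)
    have hstep : i + ((-k - 1 : ℤ) : ZMod n) + 1 = i + ((-k : ℤ) : ZMod n) := by push_cast; ring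
    simpa only [hstep] using h (i + ((-k - 1 : ℤ) : ZMod n))

theorem ZMod.prod_eq_prod_of_mul_eq_mul_succ {M : Type*} [CommMonoidWithZero M]
    [IsCancelMulZero M] [Nontrivial M] {n : ℕ} [NeZero n] {a f g : ZMod n → M}
    (ha : ∀ i, a i ≠ 0) (h : ∀ i, a i * f i = a (i + 1) * g i) : ∏ i, f i = ∏ i, g i := by
  have hshift : ∏ i, a (i + 1) = ∏ i, a i :=
    Fintype.prod_equiv (Equiv.addRight 1) _ _ fun _ => rfl
  refine mul_left_cancel₀ (Finset.prod_ne_zero_iff.mpr fun i _ => ha i : ∏ i, a i ≠ 0) ?_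
  calc (∏ i, a i) * ∏ i, f i = ∏ i, a (i + 1) * g i := by
        rw [← Finset.prod_mul_distrib]; exact Fintype.prod_congr _ _ h
    _ = (∏ i, a i) * ∏ i, g i := by rw [Finset.prod_mul_distrib, hshift]

theorem Subgroup.commensurable_of_le {G : Type*} [Group G] {H K : Subgroup G} (hle : H ≤ K)
    (hHK : H.relIndex K ≠ 0) : H.Commensurable K :=
  ⟨hHK, by simp [relIndex_eq_one.mpr hle]⟩

theorem weighted_cycle_product_eq_general (G : Type*) [Group G] (n : ℕ) [NeZero n]
    (v : ZMod n → Subgroup G)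
    (d : ZMod n → Bool) (r : ZMod n → ℕ)
    (h : ∀ i : ZMod n,
      if d i then v i ≤ v (i + 1) ∧ (v i).relIndex (v (i + 1)) = r i ∧ r i ≠ 0
      else v (i + 1) ≤ v i ∧ (v (i + 1)).relIndex (v i) = r i ∧ r i ≠ 0) :
    ∏ i ∈ Finset.univ.filter (fun i => d i = true), r i =
      ∏ i ∈ Finset.univ.filter (fun i => d i = false), r i := by
  have hcomm : ∀ i, (v i).Commensurable (v (i + 1)) := fun i => by
    have hi := h i
    split_ifs at hi
    exacts [Subgroup.commensurable_of_le hi.1 (hi.2.1 ▸ hi.2.2),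
      (Subgroup.commensurable_of_le hi.1 (hi.2.1 ▸ hi.2.2)).symm]
  set B := ⨅ i, v i
  have hB : ∀ i, B.relIndex (v i) ≠ 0 := fun i => Subgroup.relIndex_iInf_ne_zero fun j =>
    (Subgroup.Commensurable.equivalence.zmod_of_forall_succ hcomm j i).1
  rw [Finset.prod_filter, Finset.prod_filter]
  refine ZMod.prod_eq_prod_of_mul_eq_mul_succ hB fun i => ?_
  have hi := h i
  cases hd : d i <;>
    simp only [hd, Bool.false_eq_true, Bool.true_eq_false, if_true, if_false, mul_one] at hi ⊢ <;>
    rw [← hi.2.1, Subgroup.relIndex_mul_relIndex _ _ _ (iInf_le _ _) hi.1]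

/-- In the directed graph on subgroups of `G` with an arc of weight `r` from `H`
to `K` whenever `H ≤ K`, `H ≠ K` and `[K : H] = r` is finite, for any cycle the
product of weights of clockwise arcs equals the product of weights of
counter-clockwise arcs.  The cycle is given by distinct vertices `v i` indexed
by `ZMod n` (`n ≥ 3`); `d i = true` means the edge between `v i` and `v (i+1)`
is a clockwise arc `v i → v (i+1)`, and `d i = false` means it is a
counter-clockwise arc `v (i+1) → v i`; `r i` is its weight. -/
theorem weighted_cycle_product_eq (G : Type*) [Group G] (n : ℕ) [NeZero n] (hn : 3 ≤ n)
    (v : ZMod n → Subgroup G) (hv : Function.Injective v)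
    (d : ZMod n → Bool) (r : ZMod n → ℕ)
    (h : ∀ i : ZMod n,
      if d i then v i ≤ v (i + 1) ∧ (v i).relIndex (v (i + 1)) = r i ∧ r i ≠ 0
      else v (i + 1) ≤ v i ∧ (v (i + 1)).relIndex (v i) = r i ∧ r i ≠ 0) :
    ∏ i ∈ Finset.univ.filter (fun i => d i = true), r i =
      ∏ i ∈ Finset.univ.filter (fun i => d i = false), r i :=
  weighted_cycle_product_eq_general G n v d r h
end

section
/- If n = p₁^{n₁} ⋯ p_s^{n_s} with p₁,…,p_s distinct primes, then the prime index graph Π(ℤ_n) is isomorphic to the Cartesian product of paths P_{n₁+1} □ ⋯ □ P_{n_s+1}. -/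
/-- The prime index graph of a group: vertices are subgroups, two distinct
subgroups are adjacent iff one is contained in the other with prime index. -/
def primeIndexGraph (G : Type*) [Group G] : SimpleGraph (Subgroup G) :=
  SimpleGraph.fromRel (fun H K => H ≤ K ∧ (H.relIndex K).Prime)

/-- The Cartesian (box) product of a finite family of graphs: two tuples are
adjacent iff they differ in exactly one coordinate, in which they are adjacent. -/
def boxProdPi {ι : Type*} {α : ι → Type*} (Γ : ∀ i, SimpleGraph (α i)) :
    SimpleGraph (∀ i, α i) where
  Adj a b := ∃ i, (Γ i).Adj (a i) (b i) ∧ ∀ j, j ≠ i → a j = b j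
  symm := by
    constructor
    rintro a b ⟨i, hadj, heq⟩
    exact ⟨i, hadj.symm, fun j hj => (heq j hj).symm⟩
  loopless := by
    constructor
    rintro a ⟨i, hadj, -⟩
    exact (Γ i).loopless.irrefl _ hadj

/-!
In a finite cyclic group every subgroup `H` is the kernel of `x ↦ x ^ |H|`, so subgroups correspond
to divisors of `n`, inclusion to divisibility, and `H ⋖ K` holds exactly when `[K : H]` is prime
(a prime `q` dividing `[K : H]` yields the intermediate subgroup of order `|H| q`). Hence `Π(ℤ_n)`
is the Hasse diagram of the divisor lattice of `n`, which is order isomorphic to the product of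
the chains `{0, …, nᵢ}`, and the Hasse diagram of a product is the box product of the Hasse
diagrams of the factors.
-/

namespace Nat

variable {ι : Type*} [Fintype ι] {p : ι → ℕ}

theorem prod_pow_ne_zero (hp : ∀ i, (p i).Prime) (a : ι → ℕ) : ∏ i, p i ^ a i ≠ 0 :=
  Finset.prod_ne_zero_iff.mpr fun i _ => pow_ne_zero _ (hp i).ne_zero

theorem factorization_prod_pow (hp : ∀ i, (p i).Prime) (a : ι → ℕ) :
    (∏ i, p i ^ a i).factorization = ∑ i, Finsupp.single (p i) (a i) := by
  rw [Nat.factorization_prod fun i _ => pow_ne_zero _ (hp i).ne_zero]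
  exact Finset.sum_congr rfl fun i _ => (hp i).factorization_pow

theorem factorization_prod_pow_apply (hp : ∀ i, (p i).Prime) (hinj : p.Injective)
    (a : ι → ℕ) (j : ι) : (∏ i, p i ^ a i).factorization (p j) = a j := by
  classical
  rw [factorization_prod_pow hp, Finsupp.finsetSum_apply,
    Finset.sum_eq_single_of_mem j (Finset.mem_univ j) fun i _ hij => ?_, Finsupp.single_eq_same]
  exact Finsupp.single_eq_of_ne (hinj.ne hij).symm

theorem prod_pow_dvd_prod_pow_iff (hp : ∀ i, (p i).Prime) (hinj : p.Injective)
    {a b : ι → ℕ} : ∏ i, p i ^ a i ∣ ∏ i, p i ^ b i ↔ a ≤ b := by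
  refine ⟨fun h j => ?_, fun h => Finset.prod_dvd_prod_of_dvd _ _ fun i _ => pow_dvd_pow _ (h i)⟩
  have := (Nat.factorization_le_iff_dvd (prod_pow_ne_zero hp a) (prod_pow_ne_zero hp b)).mpr h (p j)
  rwa [factorization_prod_pow_apply hp hinj, factorization_prod_pow_apply hp hinj] at this

theorem exists_eq_prod_pow_of_dvd (hp : ∀ i, (p i).Prime) (hinj : p.Injective)
    {k : ι → ℕ} {d : ℕ} (hd : d ∣ ∏ i, p i ^ k i) : ∃ a ≤ k, ∏ i, p i ^ a i = d := by
  have hd0 : d ≠ 0 := ne_zero_of_dvd_ne_zero (prod_pow_ne_zero hp k) hd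
  have hle := (Nat.factorization_le_iff_dvd hd0 (prod_pow_ne_zero hp k)).mpr hd
  refine ⟨fun i => d.factorization (p i), fun j => ?_, ?_⟩
  · simpa only [factorization_prod_pow_apply hp hinj] using hle (p j)
  refine Nat.eq_of_factorization_eq (prod_pow_ne_zero hp _) hd0 fun q => ?_
  by_cases hq : q ∈ Set.range p
  · obtain ⟨j, rfl⟩ := hq
    exact factorization_prod_pow_apply hp hinj _ j
  have hzero : ∀ a : ι → ℕ, (∏ i, p i ^ a i).factorization q = 0 := fun a => by
    rw [factorization_prod_pow hp, Finsupp.finsetSum_apply]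
    exact Finset.sum_eq_zero fun i _ => Finsupp.single_eq_of_ne fun h => hq ⟨i, h.symm⟩
  rw [hzero, eq_comm, ← Nat.le_zero, ← hzero k]
  exact hle q

end Nat

namespace Subgroup

variable {G : Type*}

theorem covBy_of_relIndex_prime [Group G] {H K : Subgroup G} (hle : H ≤ K)
    (hprime : (H.relIndex K).Prime) : H ⋖ K := by
  refine ⟨hle.lt_of_not_ge fun hKH => hprime.ne_one (relIndex_eq_one.mpr hKH), ?_⟩
  intro L hHL hLK
  have hmul := relIndex_mul_relIndex _ _ _ hHL.le hLK.le
  rcases Nat.prime_mul_iff.mp (hmul ▸ hprime) with ⟨-, h⟩ | ⟨-, h⟩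
  · exact hLK.not_ge (relIndex_eq_one.mp h)
  · exact hHL.not_ge (relIndex_eq_one.mp h)

theorem card_mul_relIndex [Group G] {H K : Subgroup G} (hle : H ≤ K) :
    Nat.card H * H.relIndex K = Nat.card K := by
  simpa only [relIndex_bot_left] using relIndex_mul_relIndex _ _ _ bot_le hle

variable [CommGroup G] [IsCyclic G] [Finite G]

theorem eq_ker_powMonoidHom_card (H : Subgroup G) :
    H = (powMonoidHom (Nat.card H) : G →* G).ker := by
  refine eq_of_le_of_card_ge (fun x hx => ?_) ?_
  · simpa only [MonoidHom.mem_ker, powMonoidHom_apply, SubgroupClass.coe_pow, OneMemClass.coe_one]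
      using congrArg Subtype.val (pow_card_eq_one' (x := (⟨x, hx⟩ : H)))
  · rw [IsCyclic.card_powMonoidHom_ker, Nat.gcd_eq_right (card_subgroup_dvd_card H)]

theorem le_iff_card_dvd_card {H K : Subgroup G} : H ≤ K ↔ Nat.card H ∣ Nat.card K := by
  refine ⟨card_dvd_of_le, fun ⟨c, hc⟩ x hx => ?_⟩
  rw [eq_ker_powMonoidHom_card H, MonoidHom.mem_ker, powMonoidHom_apply] at hx
  rw [eq_ker_powMonoidHom_card K, MonoidHom.mem_ker, powMonoidHom_apply, hc, pow_mul, hx, one_pow]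

theorem eq_of_card_eq {H K : Subgroup G} (h : Nat.card H = Nat.card K) : H = K :=
  le_antisymm (le_iff_card_dvd_card.mpr h.dvd) (le_iff_card_dvd_card.mpr h.symm.dvd)

theorem card_ker_powMonoidHom {d : ℕ} (hd : d ∣ Nat.card G) :
    Nat.card (powMonoidHom d : G →* G).ker = d := by
  rw [IsCyclic.card_powMonoidHom_ker, Nat.gcd_eq_right hd]

theorem covBy_iff_relIndex_prime {H K : Subgroup G} :
    H ⋖ K ↔ H ≤ K ∧ (H.relIndex K).Prime := by
  refine ⟨fun hcov => ⟨hcov.le, ?_⟩, fun h => covBy_of_relIndex_prime h.1 h.2⟩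
  have hcard := card_mul_relIndex hcov.le
  have hne : H.relIndex K ≠ 1 := fun h => hcov.lt.not_ge (relIndex_eq_one.mp h)
  set q := (H.relIndex K).minFac
  have hq : q.Prime := Nat.minFac_prime hne
  have hHqK : Nat.card H * q ∣ Nat.card K := hcard ▸ mul_dvd_mul_left _ (Nat.minFac_dvd _)
  set L := (powMonoidHom (Nat.card H * q) : G →* G).ker
  have hL : Nat.card L = Nat.card H * q :=
    card_ker_powMonoidHom (hHqK.trans (card_subgroup_dvd_card K))
  have hHL : H < L := by
    refine lt_of_le_of_ne (le_iff_card_dvd_card.mpr (hL ▸ dvd_mul_right _ _)) fun hHL => ?_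
    rw [← hHL] at hL
    exact hq.ne_one (Nat.eq_of_mul_eq_mul_left Nat.card_pos (hL.symm.trans (mul_one _).symm))
  have hLK : L = K := by
    by_contra hLK
    exact hcov.2 hHL (lt_of_le_of_ne (le_iff_card_dvd_card.mpr (hL ▸ hHqK)) hLK)
  rw [hLK, ← hcard] at hL
  rwa [Nat.eq_of_mul_eq_mul_left Nat.card_pos hL]

end Subgroup

/-- The subgroup with exponent vector `a` is the one of order `∏ i, p i ^ a i`. -/
noncomputable def IsCyclic.exponentsOrderIsoSubgroup {G : Type*} [CommGroup G] [IsCyclic G]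
    [Finite G] {ι : Type*} [Fintype ι] {p k : ι → ℕ} (hp : ∀ i, (p i).Prime)
    (hinj : p.Injective) (hG : Nat.card G = ∏ i, p i ^ k i) :
    (∀ i, Fin (k i + 1)) ≃o Subgroup G :=
  have hcard (a : ∀ i, Fin (k i + 1)) :
      Nat.card (powMonoidHom (∏ i, p i ^ (a i : ℕ)) : G →* G).ker = ∏ i, p i ^ (a i : ℕ) :=
    Subgroup.card_ker_powMonoidHom <| hG ▸ (Nat.prod_pow_dvd_prod_pow_iff hp hinj).mpr
      fun i => Nat.lt_succ_iff.mp (a i).isLt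
  OrderIso.ofSurjective
    (OrderEmbedding.ofMapLEIff (fun a => (powMonoidHom (∏ i, p i ^ (a i : ℕ)) : G →* G).ker)
      fun a b => by
        rw [Subgroup.le_iff_card_dvd_card, hcard, hcard, Nat.prod_pow_dvd_prod_pow_iff hp hinj]
        rfl)
    fun H => by
      obtain ⟨c, hck, hc⟩ := Nat.exists_eq_prod_pow_of_dvd hp hinj (hG ▸ H.card_subgroup_dvd_card)
      refine ⟨fun i => ⟨c i, Nat.lt_succ_of_le (hck i)⟩, Subgroup.eq_of_card_eq ?_⟩
      exact (hcard _).trans hc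

open SimpleGraph

theorem primeIndexGraph_eq_hasse (G : Type*) [CommGroup G] [IsCyclic G] [Finite G] :
    primeIndexGraph G = hasse (Subgroup G) := by
  ext H K
  simp only [primeIndexGraph, fromRel_adj, hasse_adj, ← Subgroup.covBy_iff_relIndex_prime]
  exact ⟨And.right, fun h => ⟨h.elim CovBy.ne (fun h => h.ne.symm), h⟩⟩

theorem hasse_pi {ι : Type*} (α : ι → Type*) [∀ i, PartialOrder (α i)] :
    hasse (∀ i, α i) = boxProdPi (fun i => hasse (α i)) := by
  ext a b
  simp only [hasse_adj, Pi.covBy_iff]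
  constructor
  · rintro (⟨i, hab, heq⟩ | ⟨i, hba, heq⟩)
    · exact ⟨i, Or.inl hab, heq⟩
    · exact ⟨i, Or.inr hba, fun j hj => (heq j hj).symm⟩
  · rintro ⟨i, hab | hba, heq⟩
    · exact Or.inl ⟨i, hab, heq⟩
    · exact Or.inr ⟨i, hba, fun j hj => (heq j hj).symm⟩

def OrderIso.hasseIso {α β : Type*} [Preorder α] [Preorder β] (e : α ≃o β) :
    hasse α ≃g hasse β :=
  ⟨e.toEquiv, by simp [apply_covBy_apply_iff]⟩

theorem primeIndexGraph_zmod_general (s : ℕ) (p k : Fin s → ℕ)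
    (hp : ∀ i, (p i).Prime) (hinj : Function.Injective p)
    (n : ℕ) (hn : n = ∏ i, p i ^ k i) :
    Nonempty (primeIndexGraph (Multiplicative (ZMod n)) ≃g
      boxProdPi (fun i => SimpleGraph.pathGraph (k i + 1))) := by
  have : NeZero n := ⟨hn ▸ Nat.prod_pow_ne_zero hp k⟩
  have hcard : Nat.card (Multiplicative (ZMod n)) = ∏ i, p i ^ k i := by
    rw [← hn]
    exact Nat.card_zmod n
  rw [primeIndexGraph_eq_hasse]
  change Nonempty (_ ≃g boxProdPi fun i => hasse (Fin (k i + 1)))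
  rw [← hasse_pi]
  exact ⟨(IsCyclic.exponentsOrderIsoSubgroup hp hinj hcard).symm.hasseIso⟩

theorem primeIndexGraph_zmod (s : ℕ) (p k : Fin s → ℕ)
    (hp : ∀ i, (p i).Prime) (hinj : Function.Injective p) (hk : ∀ i, 1 ≤ k i)
    (n : ℕ) (hn : n = ∏ i, p i ^ k i) :
    Nonempty (primeIndexGraph (Multiplicative (ZMod n)) ≃g
      boxProdPi (fun i => SimpleGraph.pathGraph (k i + 1))) :=
  primeIndexGraph_zmod_general s p k hp hinj n hn
end

section
/- Let G be a finite group. If the prime index graph Π(G) is 2-regular, then G ≅ ℤ_{pq} for distinct primes p and q, and Π(G) is a 4-cycle. -/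
namespace SimpleGraph

theorem nonempty_iso_cycleGraph_of_ncard_neighborSet_eq_two {V : Type*} {Γ : SimpleGraph V}
    {n : ℕ} (hreg : ∀ x, (Γ.neighborSet x).ncard = 2) (v : Fin (n + 3) ≃ V)
    (hv : ∀ i, Γ.Adj (v i) (v (i + 1))) : Nonempty (Γ ≃g cycleGraph (n + 3)) := by
  have hnbr : ∀ i, Γ.neighborSet (v i) = {v (i + 1), v (i - 1)} := by
    intro i
    have hne : i + 1 ≠ i - 1 := by
      rw [sub_eq_add_neg, Ne, add_right_inj, ← add_eq_zero_iff_eq_neg, Fin.ext_iff]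
      simp [Fin.val_add, Nat.mod_eq_of_lt (show 2 < n + 3 by omega)]
    refine (Set.eq_of_subset_of_ncard_le ?_ ?_ (Set.finite_of_ncard_ne_zero (by simp [hreg]))).symm
    · exact Set.insert_subset (hv i) (Set.singleton_subset_iff.mpr
        (by simpa using (hv (i - 1)).symm))
    · rw [hreg, Set.ncard_pair (v.injective.ne hne)]
  refine ⟨(RelIso.mk v fun {i j} => ?_).symm⟩
  rw [← mem_neighborSet, hnbr, cycleGraph_adj, Set.mem_insert_iff, Set.mem_singleton_iff,
    v.apply_eq_iff_eq, v.apply_eq_iff_eq, eq_sub_iff_add_eq, sub_eq_iff_eq_add',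
    sub_eq_iff_eq_add', eq_comm (a := j + 1), or_comm]

end SimpleGraph

theorem Nat.eq_mul_of_squarefree_of_prime_dvd_iff {n p q : ℕ} (hn : n ≠ 0) (hsq : Squarefree n)
    (hp : p.Prime) (hq : q.Prime) (hpq : p ≠ q)
    (hdvd : ∀ r : ℕ, r.Prime → (r ∣ n ↔ r = p ∨ r = q)) : n = p * q := by
  have hfac : n.primeFactors = {p, q} := by
    ext r
    simp only [Nat.mem_primeFactors, Finset.mem_insert, Finset.mem_singleton]
    refine ⟨fun ⟨hr, hrn, _⟩ => (hdvd r hr).mp hrn, ?_⟩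
    rintro (rfl | rfl)
    exacts [⟨hp, (hdvd _ hp).mpr (.inl rfl), hn⟩, ⟨hq, (hdvd _ hq).mpr (.inr rfl), hn⟩]
  rw [← Nat.prod_primeFactors_of_squarefree hsq, hfac, Finset.prod_pair hpq]

namespace Subgroup

variable {G : Type*} [Group G]

theorem exists_zpowers_eq_of_prime_card {K : Subgroup G} (hK : (Nat.card K).Prime) :
    ∃ a : G, zpowers a = K :=
  have := Fact.mk hK
  K.isCyclic_iff_exists_zpowers_eq_top.mp (isCyclic_of_prime_card rfl)

theorem disjoint_of_prime_card {K L : Subgroup G} (hK : (Nat.card K).Prime)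
    (hL : (Nat.card L).Prime) (hKL : K ≠ L) : Disjoint K L := by
  have : Finite K := Nat.finite_of_card_ne_zero hK.ne_zero
  have : Finite L := Nat.finite_of_card_ne_zero hL.ne_zero
  rw [disjoint_iff, ← card_eq_one]
  refine (hK.eq_one_or_self_of_dvd _ (card_dvd_of_le inf_le_left)).resolve_right fun hinf => ?_
  have hKinf : K ⊓ L = K := eq_of_le_of_card_ge inf_le_left hinf.ge
  have hcard : Nat.card L = Nat.card K :=
    ((Nat.prime_dvd_prime_iff_eq hK hL).mp (hinf ▸ card_dvd_of_le inf_le_right)).symm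
  exact hKL (eq_of_le_of_card_ge (hKinf ▸ inf_le_right) hcard.le)

theorem commute_of_le_normalizer_of_disjoint {H₁ H₂ : Subgroup G} (h₁ : H₁ ≤ normalizer H₂)
    (h₂ : H₂ ≤ normalizer H₁) (hdis : Disjoint H₁ H₂) {x y : G} (hx : x ∈ H₁) (hy : y ∈ H₂) :
    Commute x y := by
  suffices x * y * x⁻¹ * y⁻¹ = 1 by
    rwa [mul_inv_eq_one, mul_inv_eq_iff_eq_mul] at this
  refine hdis.le_bot ⟨?_, ?_⟩
  · rw [mul_assoc, mul_assoc, ← mul_assoc y]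
    exact H₁.mul_mem hx ((mem_normalizer_iff.mp (h₂ hy) _).mp (H₁.inv_mem hx))
  · exact H₂.mul_mem ((mem_normalizer_iff.mp (h₁ hx) _).mp hy) (H₂.inv_mem hy)

end Subgroup

open Subgroup
open scoped Pointwise

section PrimeCardSubgroups

variable {G : Type*} [Group G] {K L : Subgroup G}

theorem le_normalizer_of_prime_card_iff
    (hS : ∀ H : Subgroup G, (Nat.card H).Prime ↔ H = K ∨ H = L) (hKL : K ≠ L) :
    K ≤ normalizer L := by
  intro g hg
  rw [← conjAct_pointwise_smul_iff]
  have hK : ConjAct.toConjAct g • K = K := conjAct_pointwise_smul_eq_self (le_normalizer hg)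
  have hcard : Nat.card (ConjAct.toConjAct g • L : Subgroup G) = Nat.card L :=
    (Nat.card_congr (equivSMul _ L).toEquiv).symm
  rcases (hS _).mp (hcard ▸ (hS L).mpr (.inr rfl)) with hgL | hgL
  · exact absurd ((smul_left_cancel_iff _).mp (hgL.trans hK.symm)) hKL.symm
  · exact hgL

theorem commute_of_prime_card_iff (hS : ∀ H : Subgroup G, (Nat.card H).Prime ↔ H = K ∨ H = L)
    (hKL : K ≠ L) {x y : G} (hx : x ∈ K) (hy : y ∈ L) : Commute x y :=
  commute_of_le_normalizer_of_disjoint (le_normalizer_of_prime_card_iff hS hKL)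
    (le_normalizer_of_prime_card_iff (fun H => (hS H).trans or_comm) hKL.symm)
    (disjoint_of_prime_card ((hS K).mpr (.inl rfl)) ((hS L).mpr (.inr rfl)) hKL) hx hy

theorem exists_ne_of_commute_of_card_eq_prime {p : ℕ} (hp : p.Prime) (hK : Nat.card K = p)
    (hL : Nat.card L = p) (hKL : K ≠ L) (hcomm : ∀ x ∈ K, ∀ y ∈ L, Commute x y) :
    ∃ M : Subgroup G, Nat.card M = p ∧ M ≠ K ∧ M ≠ L := by
  obtain ⟨a, rfl⟩ := exists_zpowers_eq_of_prime_card (hK ▸ hp)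
  obtain ⟨b, rfl⟩ := exists_zpowers_eq_of_prime_card (hL ▸ hp)
  have hdis := disjoint_of_prime_card (hK ▸ hp) (hL ▸ hp) hKL
  rw [Nat.card_zpowers] at hK hL
  have ha1 : a ≠ 1 := by
    rintro rfl
    exact hp.ne_one (hK ▸ orderOf_one)
  have hb1 : b ≠ 1 := by
    rintro rfl
    exact hp.ne_one (hL ▸ orderOf_one)
  have hb : b ∉ zpowers a := fun h => hb1 (disjoint_def.mp hdis h (mem_zpowers b))
  have ha : a ∉ zpowers b := fun h => ha1 (disjoint_def.mp hdis (mem_zpowers a) h)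
  have hab : Commute a b := hcomm a (mem_zpowers a) b (mem_zpowers b)
  refine ⟨zpowers (a * b), ?_, fun h => hb ?_, fun h => ha ?_⟩
  · have := Fact.mk hp
    rw [Nat.card_zpowers]
    refine orderOf_eq_prime ?_ fun h => hb ?_
    · rw [hab.mul_pow, ← hK, pow_orderOf_eq_one, one_mul, hK, ← hL, pow_orderOf_eq_one]
    · rw [eq_inv_of_mul_eq_one_right h]
      exact inv_mem (mem_zpowers a)
  · have hmem : a * b ∈ zpowers a := h ▸ mem_zpowers (a * b)
    simpa only [inv_mul_cancel_left] using mul_mem (inv_mem (mem_zpowers a)) hmem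
  · have hmem : a * b ∈ zpowers b := h ▸ mem_zpowers (a * b)
    simpa only [mul_inv_cancel_right] using mul_mem hmem (inv_mem (mem_zpowers b))

theorem card_ne_card_of_prime_card_iff
    (hS : ∀ H : Subgroup G, (Nat.card H).Prime ↔ H = K ∨ H = L) (hKL : K ≠ L) :
    Nat.card K ≠ Nat.card L := by
  intro hcard
  have hK := (hS K).mpr (.inl rfl)
  obtain ⟨M, hM, hMK, hML⟩ := exists_ne_of_commute_of_card_eq_prime hK rfl hcard.symm hKL
    fun _ hx _ hy => commute_of_prime_card_iff hS hKL hx hy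
  rcases (hS M).mp (hM ▸ hK) with h | h <;> contradiction

theorem eq_of_card_eq_of_prime_card_iff
    (hS : ∀ H : Subgroup G, (Nat.card H).Prime ↔ H = K ∨ H = L) (hKL : Nat.card K ≠ Nat.card L)
    {H : Subgroup G} (hH : Nat.card H = Nat.card K) : H = K :=
  ((hS H).mp (hH ▸ (hS K).mpr (.inl rfl))).resolve_right fun h => hKL (h ▸ hH).symm

theorem le_of_prime_dvd_card [Finite G] {p : ℕ} (hp : p.Prime)
    (huniq : ∀ H : Subgroup G, Nat.card H = p → H = K) {H : Subgroup G}
    (hdvd : p ∣ Nat.card H) : K ≤ H := by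
  have := Fact.mk hp
  obtain ⟨x, hx⟩ := exists_prime_orderOf_dvd_card' p hdvd
  rw [← huniq (zpowers (x : G)) (by rw [Nat.card_zpowers, orderOf_coe, hx])]
  exact zpowers_le.mpr x.2

theorem prime_dvd_card_iff_of_prime_card_iff [Finite G]
    (hS : ∀ H : Subgroup G, (Nat.card H).Prime ↔ H = K ∨ H = L) {r : ℕ} (hr : r.Prime) :
    r ∣ Nat.card G ↔ r = Nat.card K ∨ r = Nat.card L := by
  refine ⟨fun hrG => ?_, by rintro (rfl | rfl) <;> exact card_subgroup_dvd_card _⟩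
  have := Fact.mk hr
  obtain ⟨x, hx⟩ := exists_prime_orderOf_dvd_card' r hrG
  rw [← Nat.card_zpowers] at hx
  rcases (hS _).mp (hx ▸ hr) with h | h
  · exact .inl (h ▸ hx.symm)
  · exact .inr (h ▸ hx.symm)

end PrimeCardSubgroups

section PrimeIndexGraph

variable {G : Type*} [Group G]

theorem primeIndexGraph_adj_of_card_eq_mul {H K : Subgroup G} [Finite H] (hle : H ≤ K) {r : ℕ}
    (hr : r.Prime) (hK : Nat.card K = Nat.card H * r) : (primeIndexGraph G).Adj H K := by
  have hrel : H.relIndex K = r := by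
    have hmul := relIndex_mul_relIndex ⊥ H K bot_le hle
    rw [relIndex_bot_left, relIndex_bot_left, hK] at hmul
    exact Nat.eq_of_mul_eq_mul_left Nat.card_pos hmul
  refine SimpleGraph.fromRel_adj _ H K |>.mpr ⟨fun hHK => ?_, .inl ⟨hle, hrel ▸ hr⟩⟩
  subst hHK
  rw [relIndex_self] at hrel
  exact hr.ne_one hrel.symm

theorem primeIndexGraph_adj_bot_iff {K : Subgroup G} :
    (primeIndexGraph G).Adj ⊥ K ↔ (Nat.card K).Prime := by
  refine ⟨fun hadj => ?_, fun hK => primeIndexGraph_adj_of_card_eq_mul bot_le hK (by simp)⟩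
  obtain ⟨hne, ⟨-, hK⟩ | ⟨hle, -⟩⟩ := SimpleGraph.fromRel_adj _ _ _ |>.mp hadj
  · rwa [relIndex_bot_left] at hK
  · exact absurd (le_bot_iff.mp hle).symm hne

end PrimeIndexGraph

section TwoRegular

variable {G : Type*} [Group G] [Finite G] {K L : Subgroup G}

theorem not_sq_dvd_card_of_two_regular
    (hreg : ∀ H : Subgroup G, ((primeIndexGraph G).neighborSet H).ncard = 2) {p q : ℕ}
    (hp : p.Prime) (hq : q.Prime) (hpq : p ≠ q) {R : Subgroup G} (hK : Nat.card K = p)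
    (huniq : ∀ H : Subgroup G, Nat.card H = p → H = K) (hR : Nat.card R = p * q) :
    ¬p ^ 2 ∣ Nat.card G := by
  intro hsq
  have := Fact.mk hp
  obtain ⟨T, hT⟩ := Sylow.exists_subgroup_card_pow_prime p hsq
  have hKT : K ≤ T := le_of_prime_dvd_card hp huniq (hT ▸ dvd_pow_self p two_ne_zero)
  have hKR : K ≤ R := le_of_prime_dvd_card hp huniq (hR ▸ dvd_mul_right p q)
  have hbot : (primeIndexGraph G).Adj K ⊥ := (primeIndexGraph_adj_bot_iff.mpr (hK ▸ hp)).symm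
  have hadjT : (primeIndexGraph G).Adj K T :=
    primeIndexGraph_adj_of_card_eq_mul hKT hp (by rw [hT, hK, sq])
  have hadjR : (primeIndexGraph G).Adj K R :=
    primeIndexGraph_adj_of_card_eq_mul hKR hq (by rw [hR, hK])
  have hcard_ne {H₁ H₂ : Subgroup G} (h : Nat.card H₁ ≠ Nat.card H₂) : H₁ ≠ H₂ :=
    fun e => h (e ▸ rfl)
  have h3 : 2 < ((primeIndexGraph G).neighborSet K).ncard :=
    (Set.two_lt_ncard_iff).mpr ⟨⊥, T, R, hbot, hadjT, hadjR,
      hcard_ne (by rw [card_bot, hT]; exact (one_lt_pow₀ hp.one_lt two_ne_zero).ne),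
      hcard_ne (by rw [card_bot, hR]; exact (one_lt_mul hp.one_lt.le hq.one_lt).ne),
      hcard_ne (by rw [hT, hR, sq]; exact fun h => hpq (Nat.eq_of_mul_eq_mul_left hp.pos h))⟩
  exact h3.ne' (hreg K)

theorem card_eq_mul_and_isCyclic_of_two_regular
    (hreg : ∀ H : Subgroup G, ((primeIndexGraph G).neighborSet H).ncard = 2)
    (hS : ∀ H : Subgroup G, (Nat.card H).Prime ↔ H = K ∨ H = L) {p q : ℕ}
    (hK : Nat.card K = p) (hL : Nat.card L = q) (hpq : p ≠ q) :
    Nat.card G = p * q ∧ IsCyclic G := by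
  have hp : p.Prime := hK ▸ (hS K).mpr (.inl rfl)
  have hq : q.Prime := hL ▸ (hS L).mpr (.inr rfl)
  have huniqK (H : Subgroup G) (hH : Nat.card H = p) : H = K :=
    eq_of_card_eq_of_prime_card_iff hS (hK ▸ hL ▸ hpq) (hK ▸ hH)
  have huniqL (H : Subgroup G) (hH : Nat.card H = q) : H = L :=
    eq_of_card_eq_of_prime_card_iff (fun H => (hS H).trans or_comm) (hK ▸ hL ▸ hpq.symm)
      (hL ▸ hH)
  have hprime_dvd {r : ℕ} (hr : r.Prime) : r ∣ Nat.card G ↔ r = p ∨ r = q :=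
    hK ▸ hL ▸ prime_dvd_card_iff_of_prime_card_iff hS hr
  obtain ⟨a, rfl⟩ := exists_zpowers_eq_of_prime_card (hK ▸ hp)
  obtain ⟨b, rfl⟩ := exists_zpowers_eq_of_prime_card (hL ▸ hq)
  have hab : Commute a b := commute_of_prime_card_iff hS
    (fun h => hpq (hK ▸ hL ▸ h ▸ rfl)) (mem_zpowers a) (mem_zpowers b)
  have ha : orderOf a = p := Nat.card_zpowers a ▸ hK
  have hb : orderOf b = q := Nat.card_zpowers b ▸ hL
  have hc : Nat.card (zpowers (a * b)) = p * q := by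
    rw [Nat.card_zpowers, hab.orderOf_mul_eq_mul_orderOf_of_coprime
      (ha ▸ hb ▸ (Nat.coprime_primes hp hq).mpr hpq), ha, hb]
  have hsqfree : Squarefree (Nat.card G) := by
    refine Nat.squarefree_iff_prime_squarefree.mpr fun r hr hrr => ?_
    rcases (hprime_dvd hr).mp (dvd_of_mul_left_dvd hrr) with rfl | rfl
    · exact not_sq_dvd_card_of_two_regular hreg hp hq hpq hK huniqK hc (sq r ▸ hrr)
    · exact not_sq_dvd_card_of_two_regular hreg hq hp hpq.symm hL huniqL
        (by rw [hc, mul_comm]) (sq r ▸ hrr)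
  have hG := Nat.eq_mul_of_squarefree_of_prime_dvd_iff Nat.card_pos.ne' hsqfree hp hq hpq
    fun _ => hprime_dvd
  exact ⟨hG, isCyclic_of_orderOf_eq_card (a * b) (by rw [← Nat.card_zpowers, hc, hG])⟩

theorem nonempty_primeIndexGraph_iso_cycleGraph_four
    (hreg : ∀ H : Subgroup G, ((primeIndexGraph G).neighborSet H).ncard = 2)
    (hS : ∀ H : Subgroup G, (Nat.card H).Prime ↔ H = K ∨ H = L) {p q : ℕ}
    (hK : Nat.card K = p) (hL : Nat.card L = q) (hpq : p ≠ q) (hG : Nat.card G = p * q) :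
    Nonempty (primeIndexGraph G ≃g SimpleGraph.cycleGraph 4) := by
  have hp : p.Prime := hK ▸ (hS K).mpr (.inl rfl)
  have hq : q.Prime := hL ▸ (hS L).mpr (.inr rfl)
  have hsub (H : Subgroup G) : H = ⊥ ∨ H = K ∨ H = ⊤ ∨ H = L := by
    obtain ⟨k, l, hk, hl, hkl⟩ := Nat.dvd_mul.mp (hG ▸ card_subgroup_dvd_card H)
    rcases hp.eq_one_or_self_of_dvd k hk with hk | hk <;>
      rcases hq.eq_one_or_self_of_dvd l hl with hl | hl <;>
      simp only [hk, hl, one_mul, mul_one] at hkl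
    · exact .inl (card_eq_one.mp hkl.symm)
    · exact .inr (.inr (.inr (eq_of_card_eq_of_prime_card_iff (fun H => (hS H).trans or_comm)
        (hK ▸ hL ▸ hpq.symm) (hL ▸ hkl.symm))))
    · exact .inr (.inl (eq_of_card_eq_of_prime_card_iff hS (hK ▸ hL ▸ hpq) (hK ▸ hkl.symm)))
    · exact .inr (.inr (.inl (eq_top_of_card_eq H (hkl.symm.trans hG.symm))))
  have hbotK : (primeIndexGraph G).Adj ⊥ K := primeIndexGraph_adj_bot_iff.mpr (hK ▸ hp)
  have hbotL : (primeIndexGraph G).Adj ⊥ L := primeIndexGraph_adj_bot_iff.mpr (hL ▸ hq)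
  have hKtop : (primeIndexGraph G).Adj K ⊤ :=
    primeIndexGraph_adj_of_card_eq_mul le_top hq (by rw [card_top, hG, hK])
  have hLtop : (primeIndexGraph G).Adj L ⊤ :=
    primeIndexGraph_adj_of_card_eq_mul le_top hp (by rw [card_top, hG, hL, mul_comm])
  have hKL : K ≠ L := fun h => hpq (hK ▸ hL ▸ h ▸ rfl)
  have hbot_top : (⊥ : Subgroup G) ≠ ⊤ := fun h => hbotK.ne (eq_bot_iff.mpr (h ▸ le_top)).symm
  let v : Fin 4 → Subgroup G := ![⊥, K, ⊤, L]
  have hv : Function.Bijective v := by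
    refine ⟨fun i j hij => ?_, fun H => ?_⟩
    · fin_cases i <;> fin_cases j <;>
        simp_all [v, hbotK.ne, hbotL.ne, hKtop.ne, hLtop.ne]
    · rcases hsub H with rfl | rfl | rfl | rfl
      exacts [⟨0, rfl⟩, ⟨1, rfl⟩, ⟨2, rfl⟩, ⟨3, rfl⟩]
  refine SimpleGraph.nonempty_iso_cycleGraph_of_ncard_neighborSet_eq_two hreg
    (Equiv.ofBijective v hv) fun i => ?_
  fin_cases i
  exacts [hbotK, hKtop, hLtop.symm, hbotL.symm]

end TwoRegular

theorem primeIndexGraph_two_regular (G : Type*) [Group G] [Fintype G]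
    (h : ∀ H : Subgroup G, ((primeIndexGraph G).neighborSet H).ncard = 2) :
    ∃ p q : ℕ, p.Prime ∧ q.Prime ∧ p ≠ q ∧
      Nonempty (G ≃* Multiplicative (ZMod (p * q))) ∧
      Nonempty (primeIndexGraph G ≃g SimpleGraph.cycleGraph 4) := by
  obtain ⟨K, L, hKL, hbot⟩ := Set.ncard_eq_two.mp (h ⊥)
  have hS (H : Subgroup G) : (Nat.card H).Prime ↔ H = K ∨ H = L := by
    rw [← primeIndexGraph_adj_bot_iff, ← SimpleGraph.mem_neighborSet, hbot, Set.mem_insert_iff,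
      Set.mem_singleton_iff]
  have hpq := card_ne_card_of_prime_card_iff hS hKL
  obtain ⟨hG, hcyc⟩ := card_eq_mul_and_isCyclic_of_two_regular h hS rfl rfl hpq
  refine ⟨_, _, (hS K).mpr (.inl rfl), (hS L).mpr (.inr rfl), hpq, ?_,
    nonempty_primeIndexGraph_iso_cycleGraph_four h hS rfl rfl hpq hG⟩
  rw [← hG]
  exact ⟨(zmodCyclicMulEquiv hcyc).symm⟩
end

section
/- Let G be a finite group and N a normal subgroup of G. If Π(N) is connected and for every subgroup H/N of G/N the graph Π(H/N) is connected, then Π(G) is connected. -/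
/-!
Every subgroup `H` of `G` is joined to `⊥` in `Π(G)` through `N ⊓ H`. Subgroups of `H`
containing `N ⊓ H` correspond to subgroups of `HN/N` with the same relative indices, so a path
from `⊥` to `⊤` in `Π(HN/N)` lifts to a path from `N ⊓ H` to `H`; a path from `N ⊓ H` to `⊥`
in `Π(N)` is a path in `Π(G)` already.
-/

namespace primeIndexGraph

open Subgroup

variable {G G' : Type*} [Group G] [Group G']

lemma adj_of_le {A B : Subgroup G} (hle : A ≤ B) (hp : (A.relIndex B).Prime) :
    (primeIndexGraph G).Adj A B := by
  have hne : A ≠ B := by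
    rintro rfl
    rw [relIndex_self] at hp
    exact Nat.not_prime_one hp
  rw [primeIndexGraph, SimpleGraph.fromRel_adj]
  exact ⟨hne, Or.inl ⟨hle, hp⟩⟩

def homOfRelIndexEq (F : Subgroup G → Subgroup G') (hmono : Monotone F)
    (hrel : ∀ {A B : Subgroup G}, A ≤ B → (F A).relIndex (F B) = A.relIndex B) :
    primeIndexGraph G →g primeIndexGraph G' where
  toFun := F
  map_rel' {A B} hAB := by
    rw [primeIndexGraph, SimpleGraph.fromRel_adj] at hAB
    obtain ⟨-, ⟨hle, hp⟩ | ⟨hle, hp⟩⟩ := hAB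
    · exact adj_of_le (hmono hle) (hrel hle ▸ hp)
    · exact (adj_of_le (hmono hle) (hrel hle ▸ hp)).symm

def mapOfInjective {f : G →* G'} (hf : Function.Injective f) :
    primeIndexGraph G →g primeIndexGraph G' :=
  homOfRelIndexEq (map f) (fun _ _ => map_mono)
    fun {A B} _ => relIndex_map_map_of_injective A B hf

@[simp]
lemma mapOfInjective_apply {f : G →* G'} (hf : Function.Injective f) (A : Subgroup G) :
    mapOfInjective hf A = A.map f :=
  rfl

def comapOfSurjective {f : G →* G'} (hf : Function.Surjective f) :
    primeIndexGraph G' →g primeIndexGraph G :=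
  homOfRelIndexEq (comap f) (fun _ _ => comap_mono)
    fun {A B} _ => by rw [relIndex_comap, map_comap_eq_self_of_surjective hf]

@[simp]
lemma comapOfSurjective_apply {f : G →* G'} (hf : Function.Surjective f) (A : Subgroup G') :
    comapOfSurjective hf A = A.comap f :=
  rfl

lemma reachable_map_subtype {H : Subgroup G} {A B : Subgroup H}
    (h : (primeIndexGraph H).Reachable A B) :
    (primeIndexGraph G).Reachable (A.map H.subtype) (B.map H.subtype) :=
  h.map (mapOfInjective H.subtype_injective)

lemma reachable_ker_top {f : G →* G'} (hf : Function.Surjective f)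
    (h : (primeIndexGraph G').Connected) :
    (primeIndexGraph G).Reachable f.ker ⊤ := by
  simpa using (h.preconnected ⊥ ⊤).map (comapOfSurjective hf)

lemma reachable_inf_ker_of_connected_map (f : G →* G') (H : Subgroup G)
    (h : (primeIndexGraph (H.map f)).Connected) :
    (primeIndexGraph G).Reachable (f.ker ⊓ H) H := by
  simpa [ker_subgroupMap, subgroupOf_map_subtype, ← MonoidHom.range_eq_map] using
    reachable_map_subtype (reachable_ker_top (f.subgroupMap_surjective H) h)

end primeIndexGraph

open primeIndexGraph in
theorem primeIndexGraph_connected_of_normal_general (G : Type*) [Group G]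
    (N : Subgroup G) [N.Normal]
    (h1 : (primeIndexGraph N).Connected)
    (h2 : ∀ Q : Subgroup (G ⧸ N), (primeIndexGraph Q).Connected) :
    (primeIndexGraph G).Connected := by
  suffices hbot : ∀ H : Subgroup G, (primeIndexGraph G).Reachable H ⊥ by
    rw [SimpleGraph.connected_iff]
    exact ⟨fun H K => (hbot H).trans (hbot K).symm, ⟨⊥⟩⟩
  intro H
  have hH : (primeIndexGraph G).Reachable (N ⊓ H) H := by
    simpa using reachable_inf_ker_of_connected_map (QuotientGroup.mk' N) H (h2 _)
  have hNH : (primeIndexGraph G).Reachable (N ⊓ H) ⊥ := by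
    simpa [Subgroup.subgroupOf_map_subtype, inf_comm] using
      reachable_map_subtype (h1.preconnected ((N ⊓ H).subgroupOf N) ⊥)
  exact hH.symm.trans hNH

theorem primeIndexGraph_connected_of_normal (G : Type*) [Group G] [Fintype G]
    (N : Subgroup G) [N.Normal]
    (h1 : (primeIndexGraph N).Connected)
    (h2 : ∀ Q : Subgroup (G ⧸ N), (primeIndexGraph Q).Connected) :
    (primeIndexGraph G).Connected :=
  primeIndexGraph_connected_of_normal_general G N h1 h2
end

section
/- Let G be a group and N a normal subgroup of G. If the prime index graph Π(G) is connected, then both Π(N) and Π(G/N) are connected. -/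
/-!
Both maps `H ↦ H ∩ N` and `H ↦ HN/N` send the subgroups of `G` onto all subgroups of `N`,
resp. `G/N`, monotonically, and the relative index of the images divides the relative index of
the originals (for `H ∩ N` because `[K ∩ N : H ∩ N] = [H(K ∩ N) : H]` when `H ≤ K`). So an edge
of prime index `p` of `Π(G)` is sent either to a single vertex or to an edge of index `p`, and a
path in `Π(G)` is sent to a path.
-/

open Function

namespace SimpleGraph

variable {V W : Type*} {G : SimpleGraph V} {H : SimpleGraph W}

theorem Connected.of_surjective (f : V → W) (hf : Surjective f)
    (hadj : ∀ a b, G.Adj a b → H.Reachable (f a) (f b)) (hG : G.Connected) : H.Connected := by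
  have hreach : ∀ a b, G.Reachable a b → H.Reachable (f a) (f b) := by
    simp only [reachable_iff_reflTransGen]
    exact fun a b hab => hab.lift' f fun a b h => (reachable_iff_reflTransGen _ _).1 (hadj a b h)
  have := hG.nonempty.map f
  refine ⟨fun x y => ?_⟩
  obtain ⟨a, rfl⟩ := hf x
  obtain ⟨b, rfl⟩ := hf y
  exact hreach a b (hG a b)

end SimpleGraph

namespace Subgroup

variable {G G' : Type*} [Group G] [Group G']

theorem relIndex_sup_of_normal_right (H K : Subgroup G) [K.Normal] :
    H.relIndex (H ⊔ K) = H.relIndex K := by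
  let e := quotientSubgroupOfEmbeddingOfLE H (le_sup_right : K ≤ H ⊔ K)
  have he : Surjective e := by
    intro y
    obtain ⟨⟨x, hx⟩, rfl⟩ := QuotientGroup.mk_surjective y
    rw [← SetLike.mem_coe, sup_comm, normal_mul] at hx
    obtain ⟨k, hk, h, hh, rfl⟩ := hx
    refine ⟨QuotientGroup.mk ⟨k, hk⟩, ?_⟩
    rw [quotientSubgroupOfEmbeddingOfLE_apply_mk, QuotientGroup.eq, mem_subgroupOf]
    simpa using hh
  exact (Nat.card_congr (Equiv.ofBijective e ⟨e.injective, he⟩)).symm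

theorem relIndex_dvd_index_of_normal_right (H K : Subgroup G) [K.Normal] :
    H.relIndex K ∣ H.index :=
  relIndex_sup_of_normal_right H K ▸ relIndex_dvd_index_of_le le_sup_left

theorem relIndex_subgroupOf_dvd_of_normal (N : Subgroup G) [N.Normal] (A B : Subgroup G) :
    (A.subgroupOf N).relIndex (B.subgroupOf N) ∣ A.relIndex B := by
  have hN : (A.subgroupOf N).relIndex (B.subgroupOf N) = A.relIndex (B ⊓ N) := by
    rw [← inf_subgroupOf_right B N, relIndex_subgroupOf inf_le_right]
  have hB : A.relIndex (B ⊓ N) = (A.subgroupOf B).relIndex (N.subgroupOf B) := by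
    rw [← inf_subgroupOf_right N B, relIndex_subgroupOf inf_le_right, inf_comm]
  rw [hN, hB]
  exact relIndex_dvd_index_of_normal_right _ _

theorem relIndex_map_dvd (f : G →* G') (A B : Subgroup G) :
    (A.map f).relIndex (B.map f) ∣ A.relIndex B := by
  rw [← relIndex_comap, comap_map_eq]
  exact relIndex_dvd_of_le_left B le_sup_left

end Subgroup

section PrimeIndexGraph

variable {G G' : Type*} [Group G] [Group G']

theorem primeIndexGraph_reachable_of_relIndex_dvd_prime {H K : Subgroup G} {p : ℕ}
    (hp : p.Prime) (hHK : H ≤ K) (hdvd : H.relIndex K ∣ p) :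
    (primeIndexGraph G).Reachable H K := by
  by_cases hne : H = K
  · exact hne ▸ SimpleGraph.Reachable.refl H
  rcases (Nat.dvd_prime hp).1 hdvd with h1 | hHKp
  · exact absurd (le_antisymm hHK (Subgroup.relIndex_eq_one.1 h1)) hne
  · exact SimpleGraph.Adj.reachable <|
      (SimpleGraph.fromRel_adj _ _ _).2 ⟨hne, Or.inl ⟨hHK, hHKp ▸ hp⟩⟩

theorem primeIndexGraph_connected_of_relIndex_dvd (φ : Subgroup G → Subgroup G')
    (hφ : Surjective φ) (hmono : Monotone φ)
    (hdvd : ∀ A B : Subgroup G, A ≤ B → (φ A).relIndex (φ B) ∣ A.relIndex B)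
    (h : (primeIndexGraph G).Connected) : (primeIndexGraph G').Connected := by
  have hedge : ∀ A B : Subgroup G, A ≤ B → (A.relIndex B).Prime →
      (primeIndexGraph G').Reachable (φ A) (φ B) := fun A B hAB hp =>
    primeIndexGraph_reachable_of_relIndex_dvd_prime hp (hmono hAB) (hdvd A B hAB)
  refine h.of_surjective φ hφ fun A B hAB => ?_
  rcases ((SimpleGraph.fromRel_adj _ _ _).1 hAB).2 with ⟨hAB, hp⟩ | ⟨hBA, hp⟩
  · exact hedge A B hAB hp
  · exact (hedge B A hBA hp).symm

theorem primeIndexGraph_connected_of_normal_s16 (N : Subgroup G) [N.Normal]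
    (h : (primeIndexGraph G).Connected) : (primeIndexGraph N).Connected :=
  primeIndexGraph_connected_of_relIndex_dvd (fun H => H.subgroupOf N)
    (fun K => ⟨K.map N.subtype, K.comap_map_eq_self_of_injective N.subtype_injective⟩)
    (Subgroup.gc_map_comap N.subtype).monotone_u
    (fun A B _ => Subgroup.relIndex_subgroupOf_dvd_of_normal N A B) h

theorem primeIndexGraph_connected_of_surjective {f : G →* G'} (hf : Surjective f)
    (h : (primeIndexGraph G).Connected) : (primeIndexGraph G').Connected :=
  primeIndexGraph_connected_of_relIndex_dvd (Subgroup.map f)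
    (fun K => ⟨K.comap f, K.map_comap_eq_self_of_surjective hf⟩) (Subgroup.gc_map_comap f).monotone_l
    (fun A B _ => Subgroup.relIndex_map_dvd f A B) h

end PrimeIndexGraph

theorem primeIndexGraph_connected_normal_quotient (G : Type*) [Group G]
    (N : Subgroup G) [N.Normal] (h : (primeIndexGraph G).Connected) :
    (primeIndexGraph N).Connected ∧ (primeIndexGraph (G ⧸ N)).Connected :=
  ⟨primeIndexGraph_connected_of_normal_s16 N h,
    primeIndexGraph_connected_of_surjective (QuotientGroup.mk'_surjective N) h⟩
end

section
/- Let G ≅ H × K for groups H and K. If Π(G) is connected, then both Π(H) and Π(K) are connected. -/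
/-!
A surjection `φ : G →* Q` induces a surjection `Subgroup.map φ` on subgroups, and the index of
`φ(S)` in `φ(T)` divides that of `S` in `T`. So an edge `S < T` of prime index is sent either to a
single vertex or to an edge, paths in `Π(G)` are sent to paths in `Π(Q)`, and connectedness
passes to quotients; `H` and `K` are quotients of `H × K`.
-/

namespace SimpleGraph

variable {V W : Type*} {G : SimpleGraph V} {G' : SimpleGraph W}

theorem Reachable.map_of_adj_reachable (f : V → W)
    (hf : ∀ ⦃a b⦄, G.Adj a b → G'.Reachable (f a) (f b)) {a b : V} (h : G.Reachable a b) :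
    G'.Reachable (f a) (f b) := by
  rw [reachable_iff_reflTransGen] at h ⊢
  exact Relation.ReflTransGen.lift' f
    (fun _ _ hab => (reachable_iff_reflTransGen _ _).mp (hf hab)) _ _ h

theorem Connected.of_surjective_of_adj_reachable (f : V → W) (hsurj : Function.Surjective f)
    (hf : ∀ ⦃a b⦄, G.Adj a b → G'.Reachable (f a) (f b)) (h : G.Connected) :
    G'.Connected := by
  rw [connected_iff] at h ⊢
  refine ⟨fun u v => ?_, h.2.map f⟩
  obtain ⟨a, rfl⟩ := hsurj u
  obtain ⟨b, rfl⟩ := hsurj v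
  exact (h.1 a b).map_of_adj_reachable f hf

end SimpleGraph

theorem Subgroup.relIndex_map_dvd_s17 {G Q : Type*} [Group G] [Group Q] (φ : G →* Q)
    (S T : Subgroup G) : (S.map φ).relIndex (T.map φ) ∣ S.relIndex T := by
  rw [← Subgroup.relIndex_comap]
  exact Subgroup.relIndex_dvd_of_le_left T (Subgroup.le_comap_map φ S)

section PrimeIndexGraph

variable {G Q : Type*} [Group G] [Group Q]

theorem primeIndexGraph_adj_of_le {S T : Subgroup G} (hle : S ≤ T) (hp : (S.relIndex T).Prime) :
    (primeIndexGraph G).Adj S T := by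
  refine SimpleGraph.fromRel_adj _ _ _ |>.mpr ⟨?_, Or.inl ⟨hle, hp⟩⟩
  rintro rfl
  exact Nat.not_prime_one (S.relIndex_self ▸ hp)

theorem primeIndexGraph_reachable_map_of_le (φ : G →* Q) {S T : Subgroup G} (hle : S ≤ T)
    (hp : (S.relIndex T).Prime) : (primeIndexGraph Q).Reachable (S.map φ) (T.map φ) := by
  rcases hp.eq_one_or_self_of_dvd _ (Subgroup.relIndex_map_dvd_s17 φ S T) with h1 | hpφ
  · rw [le_antisymm (Subgroup.map_mono hle) (Subgroup.relIndex_eq_one.mp h1)]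
  · exact (primeIndexGraph_adj_of_le (Subgroup.map_mono hle) (hpφ ▸ hp)).reachable

theorem primeIndexGraph_reachable_map_of_adj (φ : G →* Q) {S T : Subgroup G}
    (h : (primeIndexGraph G).Adj S T) : (primeIndexGraph Q).Reachable (S.map φ) (T.map φ) := by
  obtain ⟨-, ⟨hle, hp⟩ | ⟨hle, hp⟩⟩ := (SimpleGraph.fromRel_adj _ _ _).mp h
  · exact primeIndexGraph_reachable_map_of_le φ hle hp
  · exact (primeIndexGraph_reachable_map_of_le φ hle hp).symm

theorem primeIndexGraph_connected_of_surjective_s17 {φ : G →* Q} (hφ : Function.Surjective φ)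
    (h : (primeIndexGraph G).Connected) : (primeIndexGraph Q).Connected :=
  h.of_surjective_of_adj_reachable (Subgroup.map φ)
    (fun A => ⟨A.comap φ, Subgroup.map_comap_eq_self_of_surjective hφ A⟩)
    (fun _ _ => primeIndexGraph_reachable_map_of_adj φ)

end PrimeIndexGraph

theorem primeIndexGraph_connected_of_prod (G H K : Type*) [Group G] [Group H]
    [Group K] (e : G ≃* H × K) (h : (primeIndexGraph G).Connected) :
    (primeIndexGraph H).Connected ∧ (primeIndexGraph K).Connected :=
  ⟨primeIndexGraph_connected_of_surjective_s17 (φ := (MonoidHom.fst H K).comp e.toMonoidHom)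
      (Prod.fst_surjective.comp e.surjective) h,
    primeIndexGraph_connected_of_surjective_s17 (φ := (MonoidHom.snd H K).comp e.toMonoidHom)
      (Prod.snd_surjective.comp e.surjective) h⟩
end
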